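/- Let m_{(p,0)}(ξ) = (1/√m) e^{2πi(s_{p,0},ξ)} − conj(μ(M*ξ)) m̃_0(ξ), where μ is the polyphase component of an H-symmetric mask m_0 corresponding to digit s_{p,0}, and m̃_0 is H-symmetric with respect to c. If F ∈ H_{p,0} (the stabilizer of the coset ⟨s_{p,0}⟩), then m_{(p,0)}(F*ξ) = e^{2πi(Fs_{p,0} − s_{p,0}, ξ)} m_{(p,0)}(ξ); that is, m_{(p,0)} is H_{p,0}-symmetric with respect to the center s_{p,0}. -/

import Mathlib

/-!
Write `f ∈ Sym(A, v)` when `f (Aᵀξ) = e^{2πi(v,ξ)} f(ξ)` for all `ξ`. Such phase symmetries are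
stable under sums (same phase), products (phases add), conjugation (phase negated) and
composition with `Mᵀ` (the symmetry matrix is conjugated by `M`, the phase multiplied by `M`).
The polyphase symmetry of `μ` says `μ ∈ Sym(M⁻¹FM, -r)`, hence `conj (μ ∘ Mᵀ) ∈ Sym(F, Mr)`,
while `m̃₀ ∈ Sym(F, Fc - c)`; the digit relation `Mr + Fc - c = Fs - s` makes the product
have the same phase as the exponential `e^{2πi(s,ξ)}`, which lies in `Sym(F, Fs - s)`.
-/

open Matrix BigOperators

def matR {d : ℕ} (A : Matrix (Fin d) (Fin d) ℤ) : Matrix (Fin d) (Fin d) ℝ :=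
  A.map Int.cast

def intc {d : ℕ} (k : Fin d → ℤ) : Fin d → ℝ := fun i => (k i : ℝ)

noncomputable def e2pi (x : ℝ) : ℂ := Complex.exp (2 * Real.pi * Complex.I * x)

def dotv {d : ℕ} (x y : Fin d → ℝ) : ℝ := ∑ i, x i * y i

def IsTrigPoly {d : ℕ} (f : (Fin d → ℝ) → ℂ) : Prop :=
  ∃ h : (Fin d → ℤ) →₀ ℂ, ∀ ξ, f ξ = ∑ k ∈ h.support, h k * e2pi (dotv (intc k) ξ)

lemma e2pi_add (x y : ℝ) : e2pi (x + y) = e2pi x * e2pi y := by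
  simp [e2pi, mul_add, Complex.exp_add]

lemma e2pi_neg_mul_self (x : ℝ) : e2pi (-x) * e2pi x = 1 := by
  rw [← e2pi_add]; simp [e2pi]

lemma conj_e2pi (x : ℝ) : starRingEnd ℂ (e2pi x) = e2pi (-x) := by
  rw [e2pi, e2pi, ← Complex.exp_conj]
  congr 1
  simp only [map_mul, map_ofNat, Complex.conj_ofReal, Complex.conj_I]
  push_cast
  ring

lemma dotv_eq_dotProduct {d : ℕ} (x y : Fin d → ℝ) : dotv x y = x ⬝ᵥ y := rfl

lemma dotv_add {d : ℕ} (x y z : Fin d → ℝ) : dotv (x + y) z = dotv x z + dotv y z :=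
  add_dotProduct x y z

lemma dotv_sub {d : ℕ} (x y z : Fin d → ℝ) : dotv (x - y) z = dotv x z - dotv y z :=
  sub_dotProduct x y z

lemma dotv_neg {d : ℕ} (x y : Fin d → ℝ) : dotv (-x) y = -dotv x y :=
  neg_dotProduct x y

lemma dotv_mulVec {d : ℕ} (A : Matrix (Fin d) (Fin d) ℝ) (x y : Fin d → ℝ) :
    dotv (A *ᵥ x) y = dotv x (Aᵀ *ᵥ y) := by
  simp only [dotv_eq_dotProduct, dotProduct_mulVec, mulVec_transpose, dotProduct_comm]

section PhaseSymmetry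

variable {d : ℕ}

def HasPhaseSymmetry (A : Matrix (Fin d) (Fin d) ℝ) (v : Fin d → ℝ)
    (f : (Fin d → ℝ) → ℂ) : Prop :=
  ∀ ξ, f (Aᵀ *ᵥ ξ) = e2pi (dotv v ξ) * f ξ

variable {A : Matrix (Fin d) (Fin d) ℝ} {v w : Fin d → ℝ} {f g : (Fin d → ℝ) → ℂ}

lemma hasPhaseSymmetry_neg_of_eq_mul (h : ∀ ξ, f ξ = e2pi (dotv v ξ) * f (Aᵀ *ᵥ ξ)) :
    HasPhaseSymmetry A (-v) f := fun ξ => by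
  rw [h ξ, dotv_neg, ← mul_assoc, e2pi_neg_mul_self, one_mul]

lemma hasPhaseSymmetry_e2pi_dotv (A : Matrix (Fin d) (Fin d) ℝ) (u : Fin d → ℝ) :
    HasPhaseSymmetry A (A *ᵥ u - u) (fun ξ => e2pi (dotv u ξ)) := fun ξ => by
  dsimp only
  rw [← e2pi_add, ← dotv_mulVec]
  congr 1
  rw [dotv_sub]
  ring

namespace HasPhaseSymmetry

lemma const_mul (hf : HasPhaseSymmetry A v f) (a : ℂ) :
    HasPhaseSymmetry A v (fun ξ => a * f ξ) := fun ξ => by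
  dsimp only
  rw [hf ξ]; ring

lemma mul (hf : HasPhaseSymmetry A v f) (hg : HasPhaseSymmetry A w g) :
    HasPhaseSymmetry A (v + w) (fun ξ => f ξ * g ξ) := fun ξ => by
  dsimp only
  rw [hf ξ, hg ξ, dotv_add, e2pi_add]
  ring

lemma sub (hf : HasPhaseSymmetry A v f) (hg : HasPhaseSymmetry A v g) :
    HasPhaseSymmetry A v (fun ξ => f ξ - g ξ) := fun ξ => by
  dsimp only
  rw [hf ξ, hg ξ]; ring

lemma conj (hf : HasPhaseSymmetry A v f) :
    HasPhaseSymmetry A (-v) (fun ξ => starRingEnd ℂ (f ξ)) := fun ξ => by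
  dsimp only
  rw [hf ξ, map_mul, conj_e2pi, dotv_neg]

lemma comp_transpose_mulVec {M : Matrix (Fin d) (Fin d) ℝ} (hM : IsUnit M.det)
    (hf : HasPhaseSymmetry (M⁻¹ * A * M) v f) :
    HasPhaseSymmetry A (M *ᵥ v) (fun ξ => f (Mᵀ *ᵥ ξ)) := fun ξ => by
  have hconj : Mᵀ *ᵥ (Aᵀ *ᵥ ξ) = (M⁻¹ * A * M)ᵀ *ᵥ (Mᵀ *ᵥ ξ) := by
    rw [mulVec_mulVec, mulVec_mulVec, ← transpose_mul, ← transpose_mul, Matrix.mul_assoc,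
      mul_nonsing_inv_cancel_left _ _ hM]
  simp only [hconj, hf (Mᵀ *ᵥ ξ), dotv_mulVec]

end HasPhaseSymmetry

end PhaseSymmetry

theorem wavelet_mask_stabilizer_symmetry_general {d m : ℕ}
    (M F : Matrix (Fin d) (Fin d) ℤ) (hdet : (matR M).det ≠ 0)
    (c : Fin d → ℝ) (s r : Fin d → ℤ)
    -- digit relation  F s_{p,0} = M r_{p,0}^F + s_{p,0} + Fc − c
    (hdig : (matR F).mulVec (intc s)
      = (matR M).mulVec (intc r) + intc s + (matR F).mulVec c - c)
    (μ mt0 mp0 : (Fin d → ℝ) → ℂ)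
    -- polyphase symmetry of the component μ = μ_{0,p,0}
    (hμ : ∀ ξ, μ ξ = e2pi (dotv (intc r) ξ)
      * μ (((matR M)⁻¹ * matR F * matR M)ᵀ.mulVec ξ))
    -- H-symmetry of m̃0 at F
    (hmt0 : ∀ ξ, mt0 ξ = e2pi (dotv (c - (matR F).mulVec c) ξ)
      * mt0 ((matR F)ᵀ.mulVec ξ))
    -- definition of the wavelet mask m_{(p,0)}
    (hmp0 : ∀ ξ, mp0 ξ = ((Real.sqrt m : ℂ))⁻¹ * e2pi (dotv (intc s) ξ)
      - (starRingEnd ℂ) (μ ((matR M)ᵀ.mulVec ξ)) * mt0 ξ) :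
    ∀ ξ : Fin d → ℝ, mp0 ((matR F)ᵀ.mulVec ξ)
      = e2pi (dotv ((matR F).mulVec (intc s) - intc s) ξ) * mp0 ξ := by
  have hμM := ((hasPhaseSymmetry_neg_of_eq_mul hμ).comp_transpose_mulVec
    (isUnit_iff_ne_zero.mpr hdet)).conj
  have hprod := hμM.mul (hasPhaseSymmetry_neg_of_eq_mul hmt0)
  have hphase : -(matR M *ᵥ -intc r) + -(c - matR F *ᵥ c) = matR F *ᵥ intc s - intc s := by
    rw [hdig, mulVec_neg]; abel
  rw [hphase] at hprod
  have hmask : mp0 = fun ξ => (Real.sqrt m : ℂ)⁻¹ * e2pi (dotv (intc s) ξ)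
      - starRingEnd ℂ (μ ((matR M)ᵀ *ᵥ ξ)) * mt0 ξ := funext hmp0
  rw [hmask]
  exact ((hasPhaseSymmetry_e2pi_dotv _ _).const_mul _).sub hprod

/-- the wavelet mask
`m_{(p,0)}(ξ) = (1/√m) e^{2πi(s_{p,0},ξ)} − conj(μ(M*ξ)) m̃_0(ξ)` satisfies
`m_{(p,0)}(F*ξ) = e^{2πi(Fs_{p,0}−s_{p,0},ξ)} m_{(p,0)}(ξ)` for every `F` in the
stabilizer `H_{p,0}`, i.e. it is `H_{p,0}`-symmetric with center `s_{p,0}`. -/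
theorem wavelet_mask_stabilizer_symmetry {d m : ℕ} (hm : 0 < m)
    (M F : Matrix (Fin d) (Fin d) ℤ) (hdet : (matR M).det ≠ 0)
    (hF : F.det = 1 ∨ F.det = -1)
    (c : Fin d → ℝ) (s r : Fin d → ℤ)
    -- digit relation  F s_{p,0} = M r_{p,0}^F + s_{p,0} + Fc − c
    (hdig : (matR F).mulVec (intc s)
      = (matR M).mulVec (intc r) + intc s + (matR F).mulVec c - c)
    (μ mt0 mp0 : (Fin d → ℝ) → ℂ)
    (hμtrig : IsTrigPoly μ) (hmt0trig : IsTrigPoly mt0)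
    -- polyphase symmetry of the component μ = μ_{0,p,0}
    (hμ : ∀ ξ, μ ξ = e2pi (dotv (intc r) ξ)
      * μ (((matR M)⁻¹ * matR F * matR M)ᵀ.mulVec ξ))
    -- H-symmetry of m̃0 at F
    (hmt0 : ∀ ξ, mt0 ξ = e2pi (dotv (c - (matR F).mulVec c) ξ)
      * mt0 ((matR F)ᵀ.mulVec ξ))
    -- definition of the wavelet mask m_{(p,0)}
    (hmp0 : ∀ ξ, mp0 ξ = ((Real.sqrt m : ℂ))⁻¹ * e2pi (dotv (intc s) ξ)
      - (starRingEnd ℂ) (μ ((matR M)ᵀ.mulVec ξ)) * mt0 ξ) :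
    ∀ ξ : Fin d → ℝ, mp0 ((matR F)ᵀ.mulVec ξ)
      = e2pi (dotv ((matR F).mulVec (intc s) - intc s) ξ) * mp0 ξ :=
  wavelet_mask_stabilizer_symmetry_general M F hdet c s r hdig μ mt0 mp0 hμ hmt0 hmp0
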